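/- arXiv:1304.1291 — 5 statements merged into one kernel-verified Lean document; each statement's English description precedes it below -/
import Mathlib

section
/- Non-squeezing lemma for Hamiltonian flows with variable stopping time. Let Σ be a bounded subset of ℝ^m and let x, p : [−L, L] × Σ → ℝ^d be maps such that all partial derivatives of x and p in (s, z) up to order 2 exist and are bounded by a constant M on [−L, L] × Σ. Assume: (i) ∂ₛx(s; z) = 2 p(s; z) for all s, z; (ii) |p(s; z)| ≥ n₀ > 0 for all s, z; (iii) for every s, z and every j = 1, …, m one has p(s; z) · ∂_{z_j} x(s; z) = 0; (iv) there are constants 0 < d₁ ≤ d₂ such that d₁|z − z′| ≤ |p(s; z) − p(s; z′)| + |x(s; z) − x(s; z′)| ≤ d₂|z − z′| for all z, z′ ∈ Σ and all |s| ≤ L; (v) for every ε > 0 there is c(ε) > 0 such that |z − z′| ≥ ε implies |p(s; z) − p(s′; z′)| + |x(s; z) − x(s′; z′)| ≥ c(ε) for all |s|, |s′| ≤ L. Let S : Σ → [−L, L] be Lipschitz continuous with Lipschitz constant S₀. Then there exist positive constants c₁ and c₂, depending only on L, M, S₀, n₀, d₁, d₂, the diameter of Σ and the function c(·), such that c₁|z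 − z′| ≤ |p(S(z); z) − p(S(z′); z′)| + |x(S(z); z) − x(S(z′); z′)| ≤ c₂|z − z′| for all z, z′ ∈ Σ. -/
/-!
Write `T(a, b) = ‖p a - p b‖ + ‖x a - x b‖` (`phaseDist`), `δ = ‖z - z'‖`, `s = S z` and
`s' = S z'`. Pair `x (s, z) - x (s', z')` with `p (s', z')` and expand `x` to first order at
`(s', z')`: by (i) and (iii) the linear term is `2 (s - s') ‖p (s', z')‖²`, so (ii) gives
`2 n₀ |s - s'| ≤ T + O(δ²)`. Moving the first point from time `s` to time `s'` changes `T` by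
`O(|s - s'|)`, so the fixed-time estimate (iv) yields `n₀ d₁ δ ≤ (n₀ + C) T + O(δ²)`, a linear
lower bound for small `δ`; for `δ` bounded below the separation (v) and the boundedness of `Σ`
take over. The upper bound holds because `x` and `p` are Lipschitz on a compact convex set
containing `[-L, L] × Σ` and `z ↦ (S z, z)` is Lipschitz.
-/

open Set Metric Filter
open scoped RealInnerProductSpace

def phaseDist {α F : Type*} [SeminormedAddCommGroup F] (x p : α → F) (a b : α) : ℝ :=
  ‖p a - p b‖ + ‖x a - x b‖

theorem norm_mk_sub_mk_le_of_abs_sub_le {E : Type*} [SeminormedAddCommGroup E] {t t' S₀ : ℝ}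
    {z z' : E} (h : |t - t'| ≤ S₀ * ‖z - z'‖) : ‖(t, z) - (t', z')‖ ≤ (S₀ + 1) * ‖z - z'‖ :=
  calc ‖(t, z) - (t', z')‖ ≤ |t - t'| + ‖z - z'‖ :=
        max_le_add_of_nonneg (norm_nonneg _) (norm_nonneg _)
    _ ≤ (S₀ + 1) * ‖z - z'‖ := by linarith

section Calculus

variable {E F : Type*} [NormedAddCommGroup E] [NormedSpace ℝ E]
  [NormedAddCommGroup F] [NormedSpace ℝ F]

theorem ContDiff.eventually_bound_fderiv_fderiv {f : E → F} (hf : ContDiff ℝ 2 f) {K : Set E}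
    (hK : IsCompact K) :
    ∀ᶠ C in atTop, ∀ q ∈ K, ‖fderiv ℝ f q‖ ≤ C ∧ ‖fderiv ℝ (fderiv ℝ f) q‖ ≤ C := by
  have hf' : ContDiff ℝ 1 (fderiv ℝ f) := hf.fderiv_right le_rfl
  obtain ⟨C₁, hC₁⟩ := hK.exists_bound_of_continuousOn hf'.continuous.continuousOn
  obtain ⟨C₂, hC₂⟩ :=
    hK.exists_bound_of_continuousOn (hf'.continuous_fderiv one_ne_zero).continuousOn
  filter_upwards [eventually_ge_atTop (max C₁ C₂)] with C hC q hq
  exact ⟨(hC₁ q hq).trans ((le_max_left _ _).trans hC),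
    (hC₂ q hq).trans ((le_max_right _ _).trans hC)⟩

theorem Convex.norm_image_sub_sub_fderiv_le {f : E → F} (hf : ContDiff ℝ 2 f) {K : Set E}
    (hK : Convex ℝ K) {C : ℝ} (hC : ∀ y ∈ K, ‖fderiv ℝ (fderiv ℝ f) y‖ ≤ C) {a b : E}
    (ha : a ∈ K) (hb : b ∈ K) :
    ‖f b - f a - fderiv ℝ f a (b - a)‖ ≤ C * ‖b - a‖ ^ 2 := by
  have hf' : Differentiable ℝ (fderiv ℝ f) :=
    (hf.fderiv_right le_rfl).differentiable one_ne_zero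
  have hC₀ : 0 ≤ C := (norm_nonneg (fderiv ℝ (fderiv ℝ f) a)).trans (hC a ha)
  have hlip : ∀ y ∈ segment ℝ a b, ‖fderiv ℝ f y - fderiv ℝ f a‖ ≤ C * ‖b - a‖ := fun y hy =>
    calc ‖fderiv ℝ f y - fderiv ℝ f a‖ ≤ C * ‖y - a‖ :=
          hK.norm_image_sub_le_of_norm_fderiv_le (fun u _ => hf' u) hC ha
            (hK.segment_subset ha hb hy)
      _ ≤ C * ‖b - a‖ := by gcongr; exact norm_sub_le_of_mem_segment hy
  calc ‖f b - f a - fderiv ℝ f a (b - a)‖ ≤ C * ‖b - a‖ * ‖b - a‖ :=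
        (convex_segment a b).norm_image_sub_le_of_norm_fderiv_le'
          (fun y _ => (hf.differentiable two_ne_zero).differentiableAt) hlip
          (left_mem_segment ℝ a b) (right_mem_segment ℝ a b)
    _ = C * ‖b - a‖ ^ 2 := by ring

theorem phaseDist_le_of_norm_fderiv_le {x p : E → F} (hx : Differentiable ℝ x)
    (hp : Differentiable ℝ p) {K : Set E} (hK : Convex ℝ K) {C : ℝ}
    (hCx : ∀ q ∈ K, ‖fderiv ℝ x q‖ ≤ C) (hCp : ∀ q ∈ K, ‖fderiv ℝ p q‖ ≤ C) {a b : E}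
    (ha : a ∈ K) (hb : b ∈ K) :
    phaseDist x p a b ≤ 2 * C * ‖a - b‖ := by
  have hpab := hK.norm_image_sub_le_of_norm_fderiv_le (fun q _ => hp q) hCp hb ha
  have hxab := hK.norm_image_sub_le_of_norm_fderiv_le (fun q _ => hx q) hCx hb ha
  rw [phaseDist]
  linarith

theorem Bornology.IsBounded.exists_isCompact_convex_prod_superset [ProperSpace E] {s : Set E}
    (hs : Bornology.IsBounded s) (a b : ℝ) :
    ∃ K : Set (ℝ × E), IsCompact K ∧ Convex ℝ K ∧ Icc a b ×ˢ s ⊆ K := by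
  obtain ⟨R, hR⟩ := isBounded_iff_forall_norm_le.mp hs
  exact ⟨Icc a b ×ˢ closedBall 0 R, isCompact_Icc.prod (isCompact_closedBall _ _),
    (convex_Icc _ _).prod (convex_closedBall _ _),
    prod_mono subset_rfl fun z hz => mem_closedBall_zero_iff.2 (hR z hz)⟩

end Calculus

section InnerProduct

variable {E F : Type*} [NormedAddCommGroup E] [NormedSpace ℝ E]
  [NormedAddCommGroup F] [InnerProductSpace ℝ F]

theorem EuclideanSpace.inner_apply_eq_zero_of_forall_single {ι : Type*} [Fintype ι]
    [DecidableEq ι] {P : F} {A : EuclideanSpace ℝ ι →L[ℝ] F}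
    (h : ∀ j, ⟪P, A (EuclideanSpace.single j 1)⟫ = 0) (w : EuclideanSpace ℝ ι) :
    ⟪P, A w⟫ = 0 := by
  have : ((innerSL ℝ P).comp A : EuclideanSpace ℝ ι →ₗ[ℝ] ℝ) = 0 :=
    (EuclideanSpace.basisFun ι ℝ).toBasis.ext fun j => by simpa using h j
  simpa using LinearMap.congr_fun this w

theorem two_mul_abs_fst_mul_norm_le {P : F} {A : ℝ × E →L[ℝ] F}
    (hA₁ : A (1, 0) = (2 : ℝ) • P) (hA₀ : ∀ w, ⟪P, A (0, w)⟫ = 0) (u : ℝ × E) (v : F) :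
    2 * |u.1| * ‖P‖ ≤ ‖v‖ + ‖v - A u‖ := by
  obtain ⟨τ, w⟩ := u
  have hAu : ⟪P, A (τ, w)⟫ = 2 * τ * ‖P‖ ^ 2 := by
    have hu : ((τ, w) : ℝ × E) = τ • ((1 : ℝ), (0 : E)) + (0, w) := by simp
    rw [hu, map_add, map_smul, hA₁, inner_add_right, hA₀, real_inner_smul_right,
      real_inner_smul_right, real_inner_self_eq_norm_sq]
    ring
  have key : ‖P‖ * (2 * |τ| * ‖P‖) ≤ ‖P‖ * (‖v‖ + ‖v - A (τ, w)‖) :=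
    calc ‖P‖ * (2 * |τ| * ‖P‖) = |⟪P, v⟫ - ⟪P, v - A (τ, w)⟫| := by
          rw [← inner_sub_right, sub_sub_cancel, hAu, abs_mul, abs_mul, abs_two,
            abs_of_nonneg (sq_nonneg ‖P‖)]
          ring
      _ ≤ |⟪P, v⟫| + |⟪P, v - A (τ, w)⟫| := abs_sub _ _
      _ ≤ ‖P‖ * ‖v‖ + ‖P‖ * ‖v - A (τ, w)‖ :=
          add_le_add (abs_real_inner_le_norm _ _) (abs_real_inner_le_norm _ _)
      _ = ‖P‖ * (‖v‖ + ‖v - A (τ, w)‖) := by ring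
  rcases (norm_nonneg P).eq_or_lt with hP | hP
  · rw [← hP, mul_zero]
    positivity
  · exact le_of_mul_le_mul_left key hP


theorem two_mul_abs_sub_mul_norm_le {x p : ℝ × E → F} (hx : ContDiff ℝ 2 x)
    {K : Set (ℝ × E)} (hK : Convex ℝ K) {C : ℝ}
    (hC : ∀ q ∈ K, ‖fderiv ℝ (fderiv ℝ x) q‖ ≤ C) {a b : ℝ × E} (ha : a ∈ K) (hb : b ∈ K)
    (hflow : fderiv ℝ x a (1, 0) = (2 : ℝ) • p a)
    (horth : ∀ w, ⟪p a, fderiv ℝ x a (0, w)⟫ = 0) :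
    2 * |b.1 - a.1| * ‖p a‖ ≤ ‖x b - x a‖ + C * ‖b - a‖ ^ 2 :=
  (two_mul_abs_fst_mul_norm_le hflow horth (b - a) (x b - x a)).trans
    (add_le_add_right (hK.norm_image_sub_sub_fderiv_le hx hC ha hb) _)

theorem mul_mul_norm_sub_le_phaseDist_add {x p : ℝ × E → F} (hx : ContDiff ℝ 2 x)
    (hp : Differentiable ℝ p) {K : Set (ℝ × E)} (hK : Convex ℝ K) {C n d₁ : ℝ}
    (hCx : ∀ q ∈ K, ‖fderiv ℝ x q‖ ≤ C) (hCp : ∀ q ∈ K, ‖fderiv ℝ p q‖ ≤ C)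
    (hCx₂ : ∀ q ∈ K, ‖fderiv ℝ (fderiv ℝ x) q‖ ≤ C) {s s' : ℝ} {z z' : E}
    (hb : (s, z) ∈ K) (ha : (s', z') ∈ K) (hc : (s', z) ∈ K)
    (hflow : fderiv ℝ x (s', z') (1, 0) = (2 : ℝ) • p (s', z'))
    (horth : ∀ w, ⟪p (s', z'), fderiv ℝ x (s', z') (0, w)⟫ = 0)
    (hn : 0 ≤ n) (hpn : n ≤ ‖p (s', z')‖)
    (hfix : d₁ * ‖z - z'‖ ≤ phaseDist x p (s', z) (s', z')) :
    n * d₁ * ‖z - z'‖ ≤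
      (n + C) * phaseDist x p (s, z) (s', z') + C ^ 2 * ‖(s, z) - (s', z')‖ ^ 2 := by
  have hC : 0 ≤ C := (norm_nonneg (fderiv ℝ x (s, z))).trans (hCx _ hb)
  have hshift : 2 * n * |s - s'| ≤ ‖x (s, z) - x (s', z')‖ + C * ‖(s, z) - (s', z')‖ ^ 2 :=
    calc 2 * n * |s - s'| ≤ 2 * |s - s'| * ‖p (s', z')‖ := by nlinarith [abs_nonneg (s - s')]
      _ ≤ _ := two_mul_abs_sub_mul_norm_le hx hK hCx₂ ha hb hflow horth
  have hvert : phaseDist x p (s, z) (s', z) ≤ 2 * C * |s - s'| := by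
    simpa using phaseDist_le_of_norm_fderiv_le (hx.differentiable two_ne_zero) hp hK hCx hCp hb hc
  have htri : d₁ * ‖z - z'‖ ≤ phaseDist x p (s, z) (s', z') + 2 * C * |s - s'| := by
    have hp₃ := norm_sub_le_norm_sub_add_norm_sub (p (s', z)) (p (s, z)) (p (s', z'))
    have hx₃ := norm_sub_le_norm_sub_add_norm_sub (x (s', z)) (x (s, z)) (x (s', z'))
    rw [norm_sub_rev (p (s', z)) (p (s, z))] at hp₃
    rw [norm_sub_rev (x (s', z)) (x (s, z))] at hx₃
    unfold phaseDist at *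
    linarith
  have hxT : ‖x (s, z) - x (s', z')‖ ≤ phaseDist x p (s, z) (s', z') :=
    le_add_of_nonneg_left (norm_nonneg _)
  nlinarith [mul_le_mul_of_nonneg_left htri hn, mul_le_mul_of_nonneg_left hshift hC]

end InnerProduct

theorem exists_pos_mul_dist_le_of_mul_dist_le_add_sq {α : Type*} [PseudoMetricSpace α]
    {s : Set α} (hs : Bornology.IsBounded s) {T : α → α → ℝ} {a A γ : ℝ} (ha : 0 < a)
    (hA : 0 < A) (hγ : 0 < γ)
    (hloc : ∀ z ∈ s, ∀ z' ∈ s, a * dist z z' ≤ A * T z z' + γ * dist z z' ^ 2)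
    (hsep : ∀ ε > 0, ∃ c > 0, ∀ z ∈ s, ∀ z' ∈ s, ε ≤ dist z z' → c ≤ T z z') :
    ∃ c > 0, ∀ z ∈ s, ∀ z' ∈ s, c * dist z z' ≤ T z z' := by
  obtain ⟨D, hD⟩ := isBounded_iff.1 hs
  set δ₀ := a / (2 * γ)
  have hδ₀ : 0 < δ₀ := by positivity
  obtain ⟨c₀, hc₀, hsep₀⟩ := hsep δ₀ hδ₀
  have hD' : 0 < max D δ₀ := lt_max_of_lt_right hδ₀
  refine ⟨min (a / (2 * A)) (c₀ / max D δ₀), lt_min (by positivity) (by positivity),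
    fun z hz z' hz' => ?_⟩
  rcases le_or_gt δ₀ (dist z z') with hfar | hnear
  · calc min (a / (2 * A)) (c₀ / max D δ₀) * dist z z' ≤ c₀ / max D δ₀ * max D δ₀ := by
          gcongr
          · exact min_le_right _ _
          · exact (hD hz hz').trans (le_max_left _ _)
      _ = c₀ := div_mul_cancel₀ _ hD'.ne'
      _ ≤ T z z' := hsep₀ z hz z' hz' hfar
  · have hquad : γ * dist z z' ^ 2 ≤ a / 2 * dist z z' :=
      calc γ * dist z z' ^ 2 ≤ γ * δ₀ * dist z z' := by
            rw [sq, ← mul_assoc]; gcongr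
        _ = a / 2 * dist z z' := by simp only [δ₀]; field_simp
    calc min (a / (2 * A)) (c₀ / max D δ₀) * dist z z' ≤ a / (2 * A) * dist z z' := by
          gcongr; exact min_le_left _ _
      _ ≤ T z z' := by
          rw [div_mul_eq_mul_div, div_le_iff₀ (by positivity)]
          nlinarith [hloc z hz z' hz']

theorem nonsqueezing_variable_stopping_time_general
    {d m : ℕ}
    (Sig : Set (EuclideanSpace ℝ (Fin m))) (hSigBdd : Bornology.IsBounded Sig)
    (L n₀ S₀ d₁ d₂ : ℝ) (hn₀ : 0 < n₀)
    (hS₀ : 0 ≤ S₀) (hd₁ : 0 < d₁)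
    (x p : ℝ × EuclideanSpace ℝ (Fin m) → EuclideanSpace ℝ (Fin d))
    (hx : ContDiff ℝ 2 x) (hp : ContDiff ℝ 2 p)
    -- (i) ∂ₛ x = 2 p
    (hflow : ∀ s ∈ Icc (-L) L, ∀ z ∈ Sig,
      fderiv ℝ x (s, z) (1, 0) = (2 : ℝ) • p (s, z))
    -- (ii) |p| ≥ n₀ > 0
    (hpn₀ : ∀ s ∈ Icc (-L) L, ∀ z ∈ Sig, n₀ ≤ ‖p (s, z)‖)
    -- (iii) p · ∂_{z_j} x = 0
    (horth : ∀ s ∈ Icc (-L) L, ∀ z ∈ Sig, ∀ j : Fin m,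
      inner ℝ (p (s, z)) (fderiv ℝ x (s, z) (0, EuclideanSpace.single j 1)) = (0 : ℝ))
    -- (iv) fixed-time non-squeezing estimates
    (hns : ∀ s ∈ Icc (-L) L, ∀ z ∈ Sig, ∀ z' ∈ Sig,
      d₁ * ‖z - z'‖ ≤ ‖p (s, z) - p (s, z')‖ + ‖x (s, z) - x (s, z')‖ ∧
      ‖p (s, z) - p (s, z')‖ + ‖x (s, z) - x (s, z')‖ ≤ d₂ * ‖z - z'‖)
    -- (v) uniform separation of distinct trajectories
    (hsep : ∀ ε : ℝ, 0 < ε → ∃ c : ℝ, 0 < c ∧ ∀ z ∈ Sig, ∀ z' ∈ Sig,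
      ∀ s ∈ Icc (-L) L, ∀ s' ∈ Icc (-L) L, ε ≤ ‖z - z'‖ →
      c ≤ ‖p (s, z) - p (s', z')‖ + ‖x (s, z) - x (s', z')‖)
    -- Lipschitz stopping time S : Σ → [-L, L]
    (S : EuclideanSpace ℝ (Fin m) → ℝ)
    (hSrange : ∀ z ∈ Sig, S z ∈ Icc (-L) L)
    (hSlip : ∀ z ∈ Sig, ∀ z' ∈ Sig, |S z - S z'| ≤ S₀ * ‖z - z'‖) :
    ∃ c₁ : ℝ, 0 < c₁ ∧ ∃ c₂ : ℝ, 0 < c₂ ∧ ∀ z ∈ Sig, ∀ z' ∈ Sig,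
      c₁ * ‖z - z'‖ ≤ ‖p (S z, z) - p (S z', z')‖ + ‖x (S z, z) - x (S z', z')‖ ∧
      ‖p (S z, z) - p (S z', z')‖ + ‖x (S z, z) - x (S z', z')‖ ≤ c₂ * ‖z - z'‖ := by
  obtain ⟨K, hKc, hK, hKs⟩ := hSigBdd.exists_isCompact_convex_prod_superset (-L) L
  obtain ⟨C, hxC, hpC, hC⟩ := ((hx.eventually_bound_fderiv_fderiv hKc).and
    ((hp.eventually_bound_fderiv_fderiv hKc).and (eventually_gt_atTop 0))).exists
  have hx₁ : ∀ q ∈ K, ‖fderiv ℝ x q‖ ≤ C := fun q hq => (hxC q hq).1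
  have hp₁ : ∀ q ∈ K, ‖fderiv ℝ p q‖ ≤ C := fun q hq => (hpC q hq).1
  have hgraph : ∀ z ∈ Sig, ∀ z' ∈ Sig, ‖(S z, z) - (S z', z')‖ ≤ (S₀ + 1) * ‖z - z'‖ :=
    fun z hz z' hz' => norm_mk_sub_mk_le_of_abs_sub_le (hSlip z hz z' hz')
  have hlocal : ∀ z ∈ Sig, ∀ z' ∈ Sig, n₀ * d₁ * dist z z' ≤
      (n₀ + C) * phaseDist x p (S z, z) (S z', z') + (C * (S₀ + 1)) ^ 2 * dist z z' ^ 2 := by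
    intro z hz z' hz'
    have hs' := hSrange z' hz'
    have hΓ := pow_le_pow_left₀ (norm_nonneg _) (hgraph z hz z' hz') 2
    have := mul_mul_norm_sub_le_phaseDist_add hx (hp.differentiable two_ne_zero) hK hx₁ hp₁
      (fun q hq => (hxC q hq).2) (hKs ⟨hSrange z hz, hz⟩) (hKs ⟨hs', hz'⟩) (hKs ⟨hs', hz⟩)
      (hflow _ hs' z' hz') (EuclideanSpace.inner_apply_eq_zero_of_forall_single
        (A := (fderiv ℝ x (S z', z')).comp (.inr ℝ ℝ _)) (horth _ hs' z' hz'))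
      hn₀.le (hpn₀ _ hs' z' hz') (hns _ hs' z hz z' hz').1
    rw [dist_eq_norm]
    linarith [mul_le_mul_of_nonneg_left hΓ (sq_nonneg C)]
  obtain ⟨c₁, hc₁, hlower⟩ := exists_pos_mul_dist_le_of_mul_dist_le_add_sq hSigBdd
    (by positivity) (by positivity) (by positivity) hlocal fun ε hε => by
      obtain ⟨c, hc, h⟩ := hsep ε hε
      exact ⟨c, hc, fun z hz z' hz' hε' =>
        h z hz z' hz' _ (hSrange z hz) _ (hSrange z' hz') (by rwa [dist_eq_norm] at hε')⟩
  refine ⟨c₁, hc₁, 2 * C * (S₀ + 1), by positivity, fun z hz z' hz' => ⟨?_, ?_⟩⟩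
  · simpa only [dist_eq_norm, phaseDist] using hlower z hz z' hz'
  · calc phaseDist x p (S z, z) (S z', z') ≤ 2 * C * ‖(S z, z) - (S z', z')‖ :=
          phaseDist_le_of_norm_fderiv_le (hx.differentiable two_ne_zero)
            (hp.differentiable two_ne_zero) hK hx₁ hp₁
            (hKs ⟨hSrange z hz, hz⟩) (hKs ⟨hSrange z' hz', hz'⟩)
      _ ≤ 2 * C * (S₀ + 1) * ‖z - z'‖ := by
          rw [mul_assoc (2 * C)]; gcongr; exact hgraph z hz z' hz'

/-- Non-squeezing lemma for Hamiltonian flows with variable stopping time. -/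
theorem nonsqueezing_variable_stopping_time
    {d m : ℕ}
    (Sig : Set (EuclideanSpace ℝ (Fin m))) (hSigBdd : Bornology.IsBounded Sig)
    (L M n₀ S₀ d₁ d₂ : ℝ) (hL : 0 < L) (hM : 0 < M) (hn₀ : 0 < n₀)
    (hS₀ : 0 ≤ S₀) (hd₁ : 0 < d₁) (hd₁₂ : d₁ ≤ d₂)
    (x p : ℝ × EuclideanSpace ℝ (Fin m) → EuclideanSpace ℝ (Fin d))
    (hx : ContDiff ℝ 2 x) (hp : ContDiff ℝ 2 p)
    -- all partial derivatives up to order 2 are bounded by M on [-L,L] × Σ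
    (hxbdd : ∀ n : ℕ, 1 ≤ n → n ≤ 2 → ∀ s ∈ Icc (-L) L, ∀ z ∈ Sig,
      ‖iteratedFDeriv ℝ n x (s, z)‖ ≤ M)
    (hpbdd : ∀ n : ℕ, 1 ≤ n → n ≤ 2 → ∀ s ∈ Icc (-L) L, ∀ z ∈ Sig,
      ‖iteratedFDeriv ℝ n p (s, z)‖ ≤ M)
    -- (i) ∂ₛ x = 2 p
    (hflow : ∀ s ∈ Icc (-L) L, ∀ z ∈ Sig,
      fderiv ℝ x (s, z) (1, 0) = (2 : ℝ) • p (s, z))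
    -- (ii) |p| ≥ n₀ > 0
    (hpn₀ : ∀ s ∈ Icc (-L) L, ∀ z ∈ Sig, n₀ ≤ ‖p (s, z)‖)
    -- (iii) p · ∂_{z_j} x = 0
    (horth : ∀ s ∈ Icc (-L) L, ∀ z ∈ Sig, ∀ j : Fin m,
      inner ℝ (p (s, z)) (fderiv ℝ x (s, z) (0, EuclideanSpace.single j 1)) = (0 : ℝ))
    -- (iv) fixed-time non-squeezing estimates
    (hns : ∀ s ∈ Icc (-L) L, ∀ z ∈ Sig, ∀ z' ∈ Sig,
      d₁ * ‖z - z'‖ ≤ ‖p (s, z) - p (s, z')‖ + ‖x (s, z) - x (s, z')‖ ∧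
      ‖p (s, z) - p (s, z')‖ + ‖x (s, z) - x (s, z')‖ ≤ d₂ * ‖z - z'‖)
    -- (v) uniform separation of distinct trajectories
    (hsep : ∀ ε : ℝ, 0 < ε → ∃ c : ℝ, 0 < c ∧ ∀ z ∈ Sig, ∀ z' ∈ Sig,
      ∀ s ∈ Icc (-L) L, ∀ s' ∈ Icc (-L) L, ε ≤ ‖z - z'‖ →
      c ≤ ‖p (s, z) - p (s', z')‖ + ‖x (s, z) - x (s', z')‖)
    -- Lipschitz stopping time S : Σ → [-L, L]
    (S : EuclideanSpace ℝ (Fin m) → ℝ)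
    (hSrange : ∀ z ∈ Sig, S z ∈ Icc (-L) L)
    (hSlip : ∀ z ∈ Sig, ∀ z' ∈ Sig, |S z - S z'| ≤ S₀ * ‖z - z'‖) :
    ∃ c₁ : ℝ, 0 < c₁ ∧ ∃ c₂ : ℝ, 0 < c₂ ∧ ∀ z ∈ Sig, ∀ z' ∈ Sig,
      c₁ * ‖z - z'‖ ≤ ‖p (S z, z) - p (S z', z')‖ + ‖x (S z, z) - x (S z', z')‖ ∧
      ‖p (S z, z) - p (S z', z')‖ + ‖x (S z, z) - x (S z', z')‖ ≤ c₂ * ‖z - z'‖ :=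
  nonsqueezing_variable_stopping_time_general Sig hSigBdd L n₀ S₀ d₁ d₂ hn₀ hS₀ hd₁ x p hx hp hflow
    hpn₀ horth hns hsep S hSrange hSlip
end

section
/- Pointwise bound on the Gaussian beam residual. Let N ≥ 1 be an integer, set ℓ = ⌈N/2⌉ − 1, let Ω ⊆ ℝ^d, let γ : Ω → ℝ^d, let c > 0, and let φ⁺, φ⁻ : Ω → ℂ satisfy Im φ^±(x) ≥ c|x − γ(x)|² for all x ∈ Ω. Let c_j^± : Ω → ℂ for j = −2, …, ℓ satisfy |c_j^±(x)| ≤ C_j |x − γ(x)|^{N − 2j − 2} for j = −2, …, ℓ − 1 and |c_ℓ^±(x)| ≤ C_ℓ on Ω. Then there is a constant C depending only on N, c and the C_j such that for all k ≥ 1 and all x ∈ Ω: |e^{i k φ⁺(x)} Σ_{j=−2}^{ℓ} c_j^+(x) k^{−j} + e^{i k φ⁻(x)} Σ_{j=−2}^{ℓ} c_j^-(x) k^{−j}| ≤ C e^{−k c |x − γ(x)|²/2} k^{−N/2 + 1}. -/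
/-!
Since `|e^{ikφ}| ≤ e^{-kcr²}` with `r = |x - γ(x)|`, the `j`-th term is at most
`C_j r^{N-2j-2} k^{-j} e^{-kcr²}`. The Gaussian moment bound
`s^p e^{-as²} ≤ p! e^{1/2} a^{-p/2} e^{-as²/2}`, applied with `a = kc`, trades the power of `r`
for `k^{-(N-2j-2)/2}`, so every term is `O(k^{-N/2+1} e^{-kcr²/2})`; for the top term `j = ℓ`
this only needs `2ℓ + 2 ≥ N`.
-/

open Real Finset
open scoped Nat

lemma two_mul_ceil_half_bounds (N : ℕ) :
    (N : ℤ) ≤ 2 * ⌈(N : ℚ) / 2⌉ ∧ 2 * ⌈(N : ℚ) / 2⌉ ≤ N + 1 := by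
  have h := Rat.ceil_natCast_div_natCast N 2
  push_cast at h
  rw [h]
  omega

lemma pow_mul_exp_neg_sq_le (p : ℕ) {u : ℝ} (hu : 0 ≤ u) :
    u ^ p * exp (-u ^ 2) ≤ p ! * exp (1 / 2) * exp (-u ^ 2 / 2) := by
  have hpow : u ^ p ≤ p ! * exp u := by
    have := pow_div_factorial_le_exp u hu p
    rwa [div_le_iff₀' (by positivity)] at this
  calc u ^ p * exp (-u ^ 2) ≤ p ! * exp u * exp (-u ^ 2) := by gcongr
    _ = p ! * exp (u - u ^ 2) := by rw [mul_assoc, ← exp_add, sub_eq_add_neg]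
    _ ≤ p ! * exp (1 / 2 + -u ^ 2 / 2) := by
        gcongr
        nlinarith [sq_nonneg (u - 1)]
    _ = p ! * exp (1 / 2) * exp (-u ^ 2 / 2) := by rw [exp_add, mul_assoc]

lemma pow_mul_exp_neg_mul_sq_le (p : ℕ) {a s : ℝ} (ha : 0 < a) (hs : 0 ≤ s) :
    s ^ p * exp (-(a * s ^ 2)) ≤
      p ! * exp (1 / 2) * a ^ (-(p : ℝ) / 2) * exp (-(a * s ^ 2) / 2) := by
  set u := √a * s
  have hu2 : u ^ 2 = a * s ^ 2 := by rw [mul_pow, sq_sqrt ha.le]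
  have hs_eq : s ^ p = a ^ (-(p : ℝ) / 2) * u ^ p := by
    rw [mul_pow, ← mul_assoc, sqrt_eq_rpow, ← rpow_natCast (a ^ (1 / 2 : ℝ)) p,
      ← rpow_mul ha.le, ← rpow_add ha, show -(p : ℝ) / 2 + 1 / 2 * p = 0 by ring,
      rpow_zero, one_mul]
  have hu := pow_mul_exp_neg_sq_le p (by positivity : 0 ≤ u)
  rw [hu2] at hu
  calc s ^ p * exp (-(a * s ^ 2)) = a ^ (-(p : ℝ) / 2) * (u ^ p * exp (-(a * s ^ 2))) := by
        rw [hs_eq, mul_assoc]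
    _ ≤ a ^ (-(p : ℝ) / 2) * (p ! * exp (1 / 2) * exp (-(a * s ^ 2) / 2)) := by gcongr
    _ = _ := by ring

lemma exp_mul_pow_mul_rpow_le {c k r : ℝ} (hc : 0 < c) (hk : 1 ≤ k) (hr : 0 ≤ r)
    {n : ℝ} {p : ℕ} {j : ℤ} (hn : n ≤ p + 2 * j + 2) :
    exp (-(k * c * r ^ 2)) * (r ^ p * k ^ (-(j : ℝ))) ≤
      p ! * exp (1 / 2) * c ^ (-(p : ℝ) / 2) * exp (-k * c * r ^ 2 / 2) * k ^ (-n / 2 + 1) := by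
  have hk0 : 0 < k := by linarith
  have hgauss := pow_mul_exp_neg_mul_sq_le p (mul_pos hk0 hc) hr
  have hkpow : k ^ (-(j : ℝ)) * k ^ (-(p : ℝ) / 2) ≤ k ^ (-n / 2 + 1) := by
    rw [← rpow_add hk0]
    exact rpow_le_rpow_of_exponent_le hk (by linarith)
  calc exp (-(k * c * r ^ 2)) * (r ^ p * k ^ (-(j : ℝ)))
      = k ^ (-(j : ℝ)) * (r ^ p * exp (-(k * c * r ^ 2))) := by ring
    _ ≤ k ^ (-(j : ℝ)) * (p ! * exp (1 / 2) * (k * c) ^ (-(p : ℝ) / 2)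
          * exp (-(k * c * r ^ 2) / 2)) := by gcongr
    _ = p ! * exp (1 / 2) * c ^ (-(p : ℝ) / 2) * exp (-k * c * r ^ 2 / 2)
          * (k ^ (-(j : ℝ)) * k ^ (-(p : ℝ) / 2)) := by
        rw [mul_rpow hk0.le hc.le, neg_mul, neg_mul]; ring
    _ ≤ _ := by gcongr

lemma norm_cexp_I_mul_le {c k r : ℝ} (hk : 0 ≤ k) {w : ℂ} (hw : c * r ^ 2 ≤ w.im) :
    ‖Complex.exp (Complex.I * k * w)‖ ≤ exp (-(k * c * r ^ 2)) := by
  rw [Complex.norm_exp]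
  gcongr
  simp only [Complex.mul_re, Complex.mul_im, Complex.I_re, Complex.I_im, Complex.ofReal_re,
    Complex.ofReal_im]
  nlinarith

lemma norm_cexp_mul_sum_le {s : Finset ℤ} {c k r n : ℝ} (hc : 0 < c) (hk : 1 ≤ k) (hr : 0 ≤ r)
    {w : ℂ} (hw : c * r ^ 2 ≤ w.im) {a : ℤ → ℂ} {C : ℤ → ℝ} {p : ℤ → ℕ}
    (ha : ∀ j ∈ s, ‖a j‖ ≤ C j * r ^ p j) (hp : ∀ j ∈ s, n ≤ p j + 2 * j + 2) :
    ‖Complex.exp (Complex.I * k * w) * ∑ j ∈ s, a j * (k : ℂ) ^ (-j)‖ ≤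
      (∑ j ∈ s, |C j| * ((p j)! * exp (1 / 2) * c ^ (-(p j : ℝ) / 2)))
        * exp (-k * c * r ^ 2 / 2) * k ^ (-n / 2 + 1) := by
  have hk0 : 0 < k := by linarith
  have hterm : ∀ j ∈ s, ‖a j * (k : ℂ) ^ (-j)‖ ≤ |C j| * (r ^ p j * k ^ (-(j : ℝ))) := by
    intro j hj
    rw [norm_mul, norm_zpow, Complex.norm_of_nonneg hk0.le, ← rpow_intCast, Int.cast_neg,
      ← mul_assoc]
    gcongr
    exact (ha j hj).trans (by gcongr; exact le_abs_self _)
  calc _ = ‖Complex.exp (Complex.I * k * w)‖ * ‖∑ j ∈ s, a j * (k : ℂ) ^ (-j)‖ := norm_mul _ _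
    _ ≤ exp (-(k * c * r ^ 2)) * ∑ j ∈ s, |C j| * (r ^ p j * k ^ (-(j : ℝ))) := by
        gcongr
        · exact norm_cexp_I_mul_le hk0.le hw
        · exact (norm_sum_le _ _).trans (sum_le_sum hterm)
    _ = ∑ j ∈ s, |C j| * (exp (-(k * c * r ^ 2)) * (r ^ p j * k ^ (-(j : ℝ)))) := by
        rw [mul_sum]
        exact sum_congr rfl fun _ _ => by ring
    _ ≤ ∑ j ∈ s, |C j| * ((p j)! * exp (1 / 2) * c ^ (-(p j : ℝ) / 2)
          * exp (-k * c * r ^ 2 / 2) * k ^ (-n / 2 + 1)) := by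
        refine sum_le_sum fun j hj => ?_
        exact mul_le_mul_of_nonneg_left (exp_mul_pow_mul_rpow_le hc hk hr (hp j hj)) (abs_nonneg _)
    _ = _ := by
        rw [sum_mul, sum_mul]
        exact sum_congr rfl fun _ _ => by ring

/-- At `j = ℓ` the exponent `N - 2ℓ - 2` is `-1` or `0`, which `toNat` truncates to `0`. -/
lemma le_mul_pow_toNat_of_le_mul_zpow {N ℓ m : ℤ} (hN : 2 * ℓ + 1 ≤ N) (hN' : N ≤ 2 * ℓ + 2)
    (b C : ℤ → ℝ) {r : ℝ} (hb : ∀ j ∈ Icc m (ℓ - 1), b j ≤ C j * r ^ (N - 2 * j - 2))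
    (hbℓ : b ℓ ≤ C ℓ) : ∀ j ∈ Icc m ℓ, b j ≤ C j * r ^ (N - 2 * j - 2).toNat := by
  intro j hj
  obtain ⟨hmj, hjℓ⟩ := mem_Icc.1 hj
  rcases hjℓ.lt_or_eq with hlt | rfl
  · rw [← zpow_natCast, Int.toNat_of_nonneg (by omega)]
    exact hb j (mem_Icc.2 ⟨hmj, by omega⟩)
  · rwa [Int.toNat_eq_zero.2 (by omega), pow_zero, mul_one]

theorem gaussian_beam_residual_pointwise_bound_general
    {d : ℕ} (N : ℕ) (ℓ : ℤ) (hℓ : ℓ = ⌈(N : ℚ) / 2⌉ - 1)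
    (Ω : Set (EuclideanSpace ℝ (Fin d)))
    (γ : EuclideanSpace ℝ (Fin d) → EuclideanSpace ℝ (Fin d))
    (c : ℝ) (hc : 0 < c)
    (φp φm : EuclideanSpace ℝ (Fin d) → ℂ)
    (hφp : ∀ x ∈ Ω, c * ‖x - γ x‖ ^ 2 ≤ (φp x).im)
    (hφm : ∀ x ∈ Ω, c * ‖x - γ x‖ ^ 2 ≤ (φm x).im)
    (cp cm : ℤ → EuclideanSpace ℝ (Fin d) → ℂ)
    (Cc : ℤ → ℝ)
    (hcp : ∀ j ∈ Finset.Icc (-2 : ℤ) (ℓ - 1), ∀ x ∈ Ω,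
      ‖cp j x‖ ≤ Cc j * ‖x - γ x‖ ^ ((N : ℤ) - 2 * j - 2))
    (hcm : ∀ j ∈ Finset.Icc (-2 : ℤ) (ℓ - 1), ∀ x ∈ Ω,
      ‖cm j x‖ ≤ Cc j * ‖x - γ x‖ ^ ((N : ℤ) - 2 * j - 2))
    (hcpl : ∀ x ∈ Ω, ‖cp ℓ x‖ ≤ Cc ℓ)
    (hcml : ∀ x ∈ Ω, ‖cm ℓ x‖ ≤ Cc ℓ) :
    ∃ C : ℝ, ∀ k : ℝ, 1 ≤ k → ∀ x ∈ Ω,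
      ‖Complex.exp (Complex.I * k * φp x) * ∑ j ∈ Finset.Icc (-2 : ℤ) ℓ, cp j x * (k : ℂ) ^ (-j)
            + Complex.exp (Complex.I * k * φm x) * ∑ j ∈ Finset.Icc (-2 : ℤ) ℓ, cm j x * (k : ℂ) ^ (-j)‖
        ≤ C * Real.exp (-k * c * ‖x - γ x‖ ^ 2 / 2) * k ^ (-(N : ℝ) / 2 + 1) := by
  obtain ⟨hceil_ge, hceil_le⟩ := two_mul_ceil_half_bounds N
  set p : ℤ → ℕ := fun j => ((N : ℤ) - 2 * j - 2).toNat
  have hp : ∀ j ∈ Icc (-2 : ℤ) ℓ, (N : ℝ) ≤ p j + 2 * j + 2 := fun j _ => by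
    have := Int.self_le_toNat ((N : ℤ) - 2 * j - 2)
    exact_mod_cast (by omega : (N : ℤ) ≤ ((N : ℤ) - 2 * j - 2).toNat + 2 * j + 2)
  set B := ∑ j ∈ Icc (-2 : ℤ) ℓ, |Cc j| * ((p j)! * exp (1 / 2) * c ^ (-(p j : ℝ) / 2))
  refine ⟨2 * B, fun k hk x hx => ?_⟩
  have hplus := norm_cexp_mul_sum_le hc hk (norm_nonneg _) (hφp x hx)
    (le_mul_pow_toNat_of_le_mul_zpow (by omega) (by omega) (fun j => ‖cp j x‖) Cc
      (fun j hj => hcp j hj x hx) (hcpl x hx)) hp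
  have hminus := norm_cexp_mul_sum_le hc hk (norm_nonneg _) (hφm x hx)
    (le_mul_pow_toNat_of_le_mul_zpow (by omega) (by omega) (fun j => ‖cm j x‖) Cc
      (fun j hj => hcm j hj x hx) (hcml x hx)) hp
  calc _ ≤ _ := norm_add_le _ _
    _ ≤ _ := add_le_add hplus hminus
    _ = _ := by ring

/-- Pointwise bound on the Gaussian beam residual for an `N`-th order beam. -/
theorem gaussian_beam_residual_pointwise_bound
    {d : ℕ} (N : ℕ) (hN : 1 ≤ N) (ℓ : ℤ) (hℓ : ℓ = ⌈(N : ℚ) / 2⌉ - 1)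
    (Ω : Set (EuclideanSpace ℝ (Fin d)))
    (γ : EuclideanSpace ℝ (Fin d) → EuclideanSpace ℝ (Fin d))
    (c : ℝ) (hc : 0 < c)
    (φp φm : EuclideanSpace ℝ (Fin d) → ℂ)
    (hφp : ∀ x ∈ Ω, c * ‖x - γ x‖ ^ 2 ≤ (φp x).im)
    (hφm : ∀ x ∈ Ω, c * ‖x - γ x‖ ^ 2 ≤ (φm x).im)
    (cp cm : ℤ → EuclideanSpace ℝ (Fin d) → ℂ)
    (Cc : ℤ → ℝ)
    (hcp : ∀ j ∈ Finset.Icc (-2 : ℤ) (ℓ - 1), ∀ x ∈ Ω,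
      ‖cp j x‖ ≤ Cc j * ‖x - γ x‖ ^ ((N : ℤ) - 2 * j - 2))
    (hcm : ∀ j ∈ Finset.Icc (-2 : ℤ) (ℓ - 1), ∀ x ∈ Ω,
      ‖cm j x‖ ≤ Cc j * ‖x - γ x‖ ^ ((N : ℤ) - 2 * j - 2))
    (hcpl : ∀ x ∈ Ω, ‖cp ℓ x‖ ≤ Cc ℓ)
    (hcml : ∀ x ∈ Ω, ‖cm ℓ x‖ ≤ Cc ℓ) :
    ∃ C : ℝ, ∀ k : ℝ, 1 ≤ k → ∀ x ∈ Ω,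
      ‖Complex.exp (Complex.I * k * φp x) * ∑ j ∈ Finset.Icc (-2 : ℤ) ℓ, cp j x * (k : ℂ) ^ (-j)
            + Complex.exp (Complex.I * k * φm x) * ∑ j ∈ Finset.Icc (-2 : ℤ) ℓ, cm j x * (k : ℂ) ^ (-j)‖
        ≤ C * Real.exp (-k * c * ‖x - γ x‖ ^ 2 / 2) * k ^ (-(N : ℝ) / 2 + 1) :=
  gaussian_beam_residual_pointwise_bound_general N ℓ hℓ Ω γ c hc φp φm hφp hφm cp cm Cc hcp hcm hcpl
    hcml
end

section
/- Stationary phase evaluation of the model example on the beam axis. Fix x₁ ∈ ℝ, x₁ ≠ 0, and for k > 0 define u(x₁, k) := (−2ik/4π) ∫_{ℝ²} e^{ik√(x₁² + |y′|²) − k|y′|²/2} / √(x₁² + |y′|²) dy′. Then there exist a constant C (depending on x₁) and k₀ ≥ 1 such that for all k ≥ k₀: |u(x₁, k) − (1 + i|x₁|)^{−1} e^{ik|x₁|}| ≤ C k^{−1}. That is, the leading term of the stationary phase expansion of u on the axis x′ = 0 is exactly the Gaussian beam value u_GB(x₁, 0) = (1 + i|x₁|)^{−1} e^{ik|x₁|}.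 -/
/-!
Write `a = |x₁|`. In polar coordinates on `ℝ²` and after the substitution `t = √(a² + r²) - a`,
which turns `r dr / √(a² + r²)` into `dt` and `r² = t² + 2at`, the phase becomes linear plus a
Gaussian: `u k = -i k e^{ika} ∫₀^∞ e^{-k(a - i)t - kt²/2} dt`. Dropping the Gaussian factor gives
exactly `-i k e^{ika} / (k(a - i)) = (1 + ia)⁻¹ e^{ika}`, and `|e^{-kt²/2} - 1| ≤ kt²/2` bounds the
error by `k · (k/2) · 2/(ka)³ = 1/(a³k)`.
-/

open MeasureTheory Set Complex

lemma integral_cexp_neg_mul_Ioi {c : ℂ} (hc : 0 < c.re) :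
    ∫ t in Ioi (0 : ℝ), cexp (-(c * t)) = c⁻¹ := by
  have h := integral_exp_mul_complex_Ioi (a := -c) (by simpa using hc) 0
  simp only [neg_mul, ofReal_zero, mul_zero, Complex.exp_zero] at h
  rw [h]
  ring

lemma integral_sq_mul_exp_neg_mul_Ioi {b : ℝ} (hb : 0 < b) :
    ∫ t in Ioi (0 : ℝ), t ^ 2 * Real.exp (-(b * t)) = 2 / b ^ 3 := by
  have h := Real.integral_rpow_mul_exp_neg_mul_Ioi (a := 3) (by norm_num) hb
  rw [show (3 : ℝ) = (2 : ℕ) + 1 by norm_num, Real.Gamma_nat_eq_factorial] at h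
  norm_num at h
  rw [h]
  ring

lemma abs_exp_neg_sub_one_le {x : ℝ} (hx : 0 ≤ x) : |Real.exp (-x) - 1| ≤ x := by
  rw [abs_of_nonpos (by simpa using hx)]
  linarith [Real.add_one_le_exp (-x)]

lemma norm_integral_cexp_neg_mul_sub_mul_sq_sub_inv_le {c : ℂ} (hc : 0 < c.re) {s : ℝ}
    (hs : 0 ≤ s) :
    ‖(∫ t in Ioi (0 : ℝ), cexp (-(c * t) - s * t ^ 2)) - c⁻¹‖ ≤ 2 * s / c.re ^ 3 := by
  have hexp : IntegrableOn (fun t : ℝ => cexp (-(c * t))) (Ioi 0) :=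
    integrableOn_exp_mul_complex_Ioi (a := -c) (by simpa using hc) 0 |>.congr_fun
      (fun t _ => by simp only [neg_mul]) measurableSet_Ioi
  have hnorm (t : ℝ) : ‖cexp (-(c * t))‖ = Real.exp (-(c.re * t)) := by
    simp [Complex.norm_exp]
  have hbound : ∀ t ∈ Ioi (0 : ℝ),
      ‖cexp (-(c * t) - s * t ^ 2) - cexp (-(c * t))‖ ≤ s * (t ^ 2 * Real.exp (-(c.re * t))) := by
    intro t _
    have hfactor : cexp (-(c * t) - s * t ^ 2) - cexp (-(c * t))
        = cexp (-(c * t)) * ((Real.exp (-(s * t ^ 2)) - 1 : ℝ) : ℂ) := by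
      push_cast
      rw [sub_eq_add_neg (-(c * t)), Complex.exp_add]
      ring
    rw [hfactor, norm_mul, hnorm, norm_real, Real.norm_eq_abs]
    calc Real.exp (-(c.re * t)) * |Real.exp (-(s * t ^ 2)) - 1|
        ≤ Real.exp (-(c.re * t)) * (s * t ^ 2) := by
          gcongr
          exact abs_exp_neg_sub_one_le (by positivity)
      _ = s * (t ^ 2 * Real.exp (-(c.re * t))) := by ring
  have hgauss : IntegrableOn (fun t : ℝ => cexp (-(c * t) - s * t ^ 2)) (Ioi 0) := by
    refine hexp.norm.mono' (by fun_prop) (ae_of_all _ fun t => ?_)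
    simp only [Complex.norm_exp, sub_re, neg_re, mul_re, ofReal_re, ofReal_im, mul_zero,
      sub_zero, ← ofReal_pow]
    gcongr
    nlinarith [sq_nonneg t]
  have hmoment : IntegrableOn (fun t : ℝ => t ^ 2 * Real.exp (-(c.re * t))) (Ioi 0) :=
    .of_integral_ne_zero (by rw [integral_sq_mul_exp_neg_mul_Ioi hc]; positivity)
  calc ‖(∫ t in Ioi (0 : ℝ), cexp (-(c * t) - s * t ^ 2)) - c⁻¹‖
      = ‖∫ t in Ioi (0 : ℝ), (cexp (-(c * t) - s * t ^ 2) - cexp (-(c * t)))‖ := by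
        rw [integral_sub hgauss hexp, integral_cexp_neg_mul_Ioi hc]
    _ ≤ ∫ t in Ioi (0 : ℝ), s * (t ^ 2 * Real.exp (-(c.re * t))) :=
        norm_integral_le_of_norm_le (hmoment.const_mul s)
          ((ae_restrict_iff' measurableSet_Ioi).mpr (ae_of_all _ hbound))
    _ = 2 * s / c.re ^ 3 := by
        rw [integral_const_mul, integral_sq_mul_exp_neg_mul_Ioi hc]
        ring

section

variable {E : Type*} [NormedAddCommGroup E] [NormedSpace ℝ E]

lemma integral_fun_norm_euclideanSpace_fin_two (f : ℝ → E) :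
    ∫ y : EuclideanSpace ℝ (Fin 2), f ‖y‖ = (2 * Real.pi) • ∫ r in Ioi (0 : ℝ), r • f r := by
  rw [integral_fun_norm_addHaar volume f, finrank_euclideanSpace_fin, measureReal_def,
    EuclideanSpace.volume_ball_fin_two]
  simp [ENNReal.toReal_ofReal Real.pi_nonneg, mul_smul, ofNat_smul_eq_nsmul (R := ℝ)]

lemma image_sqrt_sq_add_sq_sub_Ioi {a : ℝ} (ha : 0 ≤ a) :
    (fun r => √(a ^ 2 + r ^ 2) - a) '' Ioi 0 = Ioi 0 := by
  ext t
  constructor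
  · rintro ⟨r, hr, rfl⟩
    have : √(a ^ 2) < √(a ^ 2 + r ^ 2) :=
      Real.sqrt_lt_sqrt (by positivity) (by nlinarith [mem_Ioi.mp hr])
    rw [Real.sqrt_sq ha] at this
    exact sub_pos.mpr this
  · intro ht
    have ht : 0 < t := ht
    refine ⟨√(t * (t + 2 * a)), Real.sqrt_pos.mpr (by positivity), ?_⟩
    beta_reduce
    rw [Real.sq_sqrt (by positivity), show a ^ 2 + t * (t + 2 * a) = (a + t) ^ 2 by ring,
      Real.sqrt_sq (by positivity)]
    ring

lemma integral_Ioi_smul_comp_sqrt_sq_add_sq {a : ℝ} (ha : 0 ≤ a) (g : ℝ → E) :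
    ∫ r in Ioi (0 : ℝ), (r / √(a ^ 2 + r ^ 2)) • g (√(a ^ 2 + r ^ 2) - a)
      = ∫ t in Ioi (0 : ℝ), g t := by
  have hderiv : ∀ r ∈ Ioi (0 : ℝ), HasDerivWithinAt (fun r => √(a ^ 2 + r ^ 2) - a)
      (r / √(a ^ 2 + r ^ 2)) (Ioi 0) r := by
    intro r hr
    have hpos : 0 < a ^ 2 + r ^ 2 := by nlinarith [mem_Ioi.mp hr]
    refine (((hasDerivAt_pow 2 r).const_add (a ^ 2)).sqrt hpos.ne' |>.sub_const a
      |>.congr_deriv ?_).hasDerivWithinAt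
    field_simp
    norm_num
  have hinj : InjOn (fun r => √(a ^ 2 + r ^ 2) - a) (Ioi 0) := by
    intro r hr s hs h
    have h : a ^ 2 + r ^ 2 = a ^ 2 + s ^ 2 :=
      (Real.sqrt_inj (by positivity) (by positivity)).mp (sub_left_inj.mp h)
    exact (pow_left_inj₀ (le_of_lt hr) (le_of_lt hs) two_ne_zero).mp (by linarith)
  conv_rhs => rw [← image_sqrt_sq_add_sq_sub_Ioi ha]
  rw [integral_image_eq_integral_abs_deriv_smul measurableSet_Ioi hderiv hinj]
  refine setIntegral_congr_fun measurableSet_Ioi fun r (hr : 0 < r) => ?_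
  rw [abs_of_nonneg (by positivity)]

end

lemma integral_Ioi_smul_cexp_div_sqrt_sq_add_sq {a : ℝ} (ha : 0 ≤ a) (k : ℝ) :
    ∫ r in Ioi (0 : ℝ), r • (cexp (I * k * (√(a ^ 2 + r ^ 2) : ℝ) - k * (r : ℂ) ^ 2 / 2)
        / (√(a ^ 2 + r ^ 2) : ℝ))
      = cexp (I * k * a) * ∫ t in Ioi (0 : ℝ), cexp (-(k * (a - I) * t) - (k / 2 : ℝ) * t ^ 2) := by
  rw [← integral_const_mul]
  refine Eq.trans ?_ (integral_Ioi_smul_comp_sqrt_sq_add_sq ha _)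
  refine setIntegral_congr_fun measurableSet_Ioi fun r (hr : 0 < r) => ?_
  have hρ : ((√(a ^ 2 + r ^ 2) : ℝ) : ℂ) ^ 2 = a ^ 2 + r ^ 2 := by
    rw [← ofReal_pow, Real.sq_sqrt (by positivity)]
    push_cast
    ring
  have hρ0 : ((√(a ^ 2 + r ^ 2) : ℝ) : ℂ) ≠ 0 :=
    ofReal_ne_zero.mpr (Real.sqrt_pos.mpr (by positivity)).ne'
  simp only [real_smul, ofReal_div, ofReal_sub, ofReal_ofNat]
  rw [← Complex.exp_add]
  field_simp
  congr 2
  linear_combination (k / 2 : ℂ) * hρ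

/-- Stationary phase evaluation of the model example on the beam axis:
the outgoing solution agrees with the Gaussian beam value up to `O(k⁻¹)`. -/
theorem model_example_stationary_phase_on_axis
    (x₁ : ℝ) (hx₁ : x₁ ≠ 0)
    (u : ℝ → ℂ)
    (hu : ∀ k : ℝ, u k = (-2 * Complex.I * (k : ℂ) / (4 * (Real.pi : ℂ))) *
      ∫ y' : EuclideanSpace ℝ (Fin 2),
        Complex.exp (Complex.I * (k : ℂ) * ((Real.sqrt (x₁ ^ 2 + ‖y'‖ ^ 2) : ℝ) : ℂ)
            - (k : ℂ) * (‖y'‖ : ℝ) ^ 2 / 2)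
          / ((Real.sqrt (x₁ ^ 2 + ‖y'‖ ^ 2) : ℝ) : ℂ)) :
    ∃ C : ℝ, ∃ k₀ : ℝ, 1 ≤ k₀ ∧ ∀ k : ℝ, k₀ ≤ k →
      ‖u k - (1 + Complex.I * |x₁|)⁻¹ * Complex.exp (Complex.I * k * |x₁|)‖
        ≤ C / k := by
  have ha : 0 < |x₁| := abs_pos.mpr hx₁
  refine ⟨1 / |x₁| ^ 3, 1, le_rfl, fun k hk => ?_⟩
  have hk0 : 0 < k := one_pos.trans_le hk
  set a := |x₁| with ha_def
  set c : ℂ := k * (a - I) with hc_def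
  have hc : c.re = k * a := by simp [c]
  set J := ∫ t in Ioi (0 : ℝ), cexp (-(c * t) - (k / 2 : ℝ) * t ^ 2) with hJ_def
  have hu' : u k = -I * k * cexp (I * k * a) * J := by
    rw [hu, ← sq_abs x₁, ← ha_def, integral_fun_norm_euclideanSpace_fin_two
      (fun r => cexp (I * k * (√(a ^ 2 + r ^ 2) : ℝ) - k * (r : ℂ) ^ 2 / 2)
        / (√(a ^ 2 + r ^ 2) : ℝ)),
      integral_Ioi_smul_cexp_div_sqrt_sq_add_sq ha.le, ← hc_def, ← hJ_def, real_smul]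
    push_cast
    field_simp
    ring
  have hGB : (1 + I * a)⁻¹ * cexp (I * k * a) = -I * k * cexp (I * k * a) * c⁻¹ := by
    have h1 : 1 + I * a ≠ 0 := fun h => by simpa using congrArg re h
    have h2 : (a : ℂ) - I ≠ 0 := fun h => by simpa using congrArg im h
    have hk' : (k : ℂ) ≠ 0 := ofReal_ne_zero.mpr hk0.ne'
    rw [hc_def]
    field_simp
    linear_combination (a : ℂ) * I_sq
  calc ‖u k - (1 + I * a)⁻¹ * cexp (I * k * a)‖ = k * ‖J - c⁻¹‖ := by
        rw [hu', hGB, ← mul_sub, norm_mul]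
        simp [Complex.norm_exp, hk0.le]
    _ ≤ k * (2 * (k / 2) / c.re ^ 3) := by
        gcongr
        exact norm_integral_cexp_neg_mul_sub_mul_sq_sub_inv_le (by rw [hc]; positivity)
          (by positivity)
    _ = 1 / a ^ 3 / k := by
        rw [hc]
        field_simp
end

section
/- Decay of a complex function from a weighted derivative bound. Let β ∈ ℂ with Im β ≥ 0, let p ≥ 0 be an integer, and let B′ > 0. Suppose v : (1, ∞) → ℂ is differentiable, v(r) → 0 as r → ∞, and |d/dr (e^{2iβr} v(r))| ≤ B′ e^{−2 r Im β} r^{−p−2} for all r > 1. Then |v(r)| ≤ B′ / ((p+1) r^{p+1}) for all r > 1. -/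
/-!
Put `g s = exp (2iβs) v s`. Then `‖g s‖ = exp (-2 s Im β) ‖v s‖ ≤ ‖v s‖ → 0`, so
`g r = -∫_r^∞ g'`. For `s ≥ r` the weight `exp (-2 s Im β)` in the bound on `g'` is at most
`exp (-2 r Im β)`, and `∫_r^∞ s^(-p-2) ds = 1 / ((p + 1) r^(p+1))`; dividing by
`‖exp (2iβr)‖ = exp (-2 r Im β)` gives the claim.
-/

open MeasureTheory Filter Set Topology

theorem norm_le_integral_Ioi_of_norm_deriv_le {E : Type*} [NormedAddCommGroup E]
    [NormedSpace ℝ E] [CompleteSpace E] {g : ℝ → E} {f : ℝ → ℝ} {a : ℝ}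
    (hg : ∀ x ∈ Ici a, DifferentiableAt ℝ g x) (hlim : Tendsto g atTop (𝓝 0))
    (hf : IntegrableOn f (Ioi a)) (hbound : ∀ x ∈ Ioi a, ‖deriv g x‖ ≤ f x) :
    ‖g a‖ ≤ ∫ x in Ioi a, f x := by
  have hbound_ae : ∀ᵐ x ∂volume.restrict (Ioi a), ‖deriv g x‖ ≤ f x :=
    ae_restrict_of_forall_mem measurableSet_Ioi hbound
  have hint : IntegrableOn (deriv g) (Ioi a) :=
    hf.mono' (aestronglyMeasurable_deriv g _) hbound_ae
  have hftc : ∫ x in Ioi a, deriv g x = 0 - g a :=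
    integral_Ioi_of_hasDerivAt_of_tendsto' (fun x hx => (hg x hx).hasDerivAt) hint hlim
  calc ‖g a‖ = ‖∫ x in Ioi a, deriv g x‖ := by rw [hftc, zero_sub, norm_neg]
    _ ≤ ∫ x in Ioi a, f x := norm_integral_le_of_norm_le hf hbound_ae

theorem Real.inv_pow_eq_rpow_neg_natCast (x : ℝ) (n : ℕ) : (x ^ n)⁻¹ = x ^ (-(n : ℝ)) := by
  rw [Real.rpow_neg_natCast, zpow_neg, zpow_natCast]

theorem integrableOn_Ioi_inv_pow_add_two (n : ℕ) {c : ℝ} (hc : 0 < c) :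
    IntegrableOn (fun x : ℝ => (x ^ (n + 2))⁻¹) (Ioi c) := by
  simp_rw [Real.inv_pow_eq_rpow_neg_natCast]
  exact integrableOn_Ioi_rpow_of_lt (by push_cast; linarith) hc

theorem integral_Ioi_inv_pow_add_two (n : ℕ) {c : ℝ} (hc : 0 < c) :
    ∫ x in Ioi c, (x ^ (n + 2))⁻¹ = ((n + 1) * c ^ (n + 1))⁻¹ := by
  simp_rw [Real.inv_pow_eq_rpow_neg_natCast]
  rw [integral_Ioi_rpow_of_lt (by push_cast; linarith) hc, mul_inv, ← Nat.cast_add_one,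
    Real.inv_pow_eq_rpow_neg_natCast]
  push_cast
  rw [show -((n : ℝ) + 2) + 1 = -(n + 1) by ring, div_neg, neg_div, neg_neg, div_eq_inv_mul]

theorem Complex.norm_exp_two_mul_I_mul_mul_ofReal (β : ℂ) (s : ℝ) :
    ‖Complex.exp (2 * Complex.I * β * s)‖ = Real.exp (-2 * s * β.im) := by
  rw [Complex.norm_exp]
  congr 1
  simp
  ring

/-- Decay of a complex function from a weighted derivative bound. -/
theorem decay_from_weighted_derivative_bound
    (β : ℂ) (hβ : 0 ≤ β.im) (p : ℕ) (B' : ℝ) (hB' : 0 < B')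
    (v : ℝ → ℂ)
    (hv : ∀ r : ℝ, 1 < r → DifferentiableAt ℝ v r)
    (hlim : Filter.Tendsto v Filter.atTop (nhds 0))
    (hbound : ∀ r : ℝ, 1 < r →
      ‖deriv (fun s : ℝ => Complex.exp (2 * Complex.I * β * s) * v s) r‖ ≤
        B' * Real.exp (-2 * r * β.im) / r ^ (p + 2)) :
    ∀ r : ℝ, 1 < r → ‖v r‖ ≤ B' / ((p + 1) * r ^ (p + 1)) := by
  intro r hr
  set g : ℝ → ℂ := fun s => Complex.exp (2 * Complex.I * β * s) * v s
  have hnorm_g (s : ℝ) : ‖g s‖ = Real.exp (-2 * s * β.im) * ‖v s‖ := by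
    rw [norm_mul, Complex.norm_exp_two_mul_I_mul_mul_ofReal]
  have hg_lim : Tendsto g atTop (𝓝 0) := by
    refine squeeze_zero_norm' ?_ (tendsto_zero_iff_norm_tendsto_zero.1 hlim)
    filter_upwards [eventually_ge_atTop 0] with s hs
    rw [hnorm_g]
    exact mul_le_of_le_one_left (norm_nonneg _) (Real.exp_le_one_iff.2 (by nlinarith))
  have hg_diff : ∀ s ∈ Ici r, DifferentiableAt ℝ g s := fun s hs => by
    have := hv s (hr.trans_le hs)
    fun_prop
  have hderiv_le : ∀ s ∈ Ioi r,
      ‖deriv g s‖ ≤ B' * Real.exp (-2 * r * β.im) * (s ^ (p + 2))⁻¹ := fun s (hs : r < s) =>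
    calc ‖deriv g s‖ ≤ B' * Real.exp (-2 * s * β.im) / s ^ (p + 2) := hbound s (hr.trans hs)
      _ ≤ B' * Real.exp (-2 * r * β.im) / s ^ (p + 2) := by
        have : 0 < s := by linarith
        gcongr B' * Real.exp ?_ / _
        nlinarith
      _ = _ := div_eq_mul_inv _ _
  have key := norm_le_integral_Ioi_of_norm_deriv_le hg_diff hg_lim
    ((integrableOn_Ioi_inv_pow_add_two p (by linarith)).const_mul _) hderiv_le
  rw [integral_const_mul, integral_Ioi_inv_pow_add_two p (by linarith), hnorm_g] at key
  rw [div_eq_mul_inv]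
  exact le_of_mul_le_mul_left (key.trans_eq (by ring)) (Real.exp_pos _)
end

section
/- Decay of all derivatives of the normalized Green's function amplitude. Let β ∈ ℂ with |β| = 1 and Im β ≥ 0, and let c ∈ ℝ. Suppose w : (1, ∞) → ℂ is infinitely differentiable, satisfies the ODE w″(r) + 2iβ w′(r) − (c/r²) w(r) = 0 for r > 1, that |w(r)| ≤ B₀ for all r > 1, and that for every integer p ≥ 1 the derivative w^{(p)}(r) → 0 as r → ∞. Then for every integer p ≥ 0 there exists a constant B_p, independent of r, such that |w^{(p)}(r)| ≤ B_p r^{−p} for all r > 1. -/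
open Set

open Filter in

lemma ode_decay_step (β : ℂ) (hβim : 0 ≤ β.im)
    (g F : ℝ → ℂ) (q : ℕ) (C : ℝ) (hC : 0 ≤ C)
    (hg : ∀ x : ℝ, 1 < x → HasDerivAt g (-(2*Complex.I*β) * g x + F x) x)
    (hFc : ContinuousOn F (Ioi 1))
    (hF : ∀ x : ℝ, 1 < x → ‖F x‖ ≤ C / x ^ (q+2))
    (hlim : Filter.Tendsto g Filter.atTop (nhds 0)) :
    ∀ r : ℝ, 1 < r → ‖g r‖ ≤ (C/(q+1)) / r^(q+1) := by
  -- auxiliary function h s = exp(2iβ s) * g s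
  set h : ℝ → ℂ := fun s => Complex.exp (2*Complex.I*β*s) * g s with hh
  set h' : ℝ → ℂ := fun s => Complex.exp (2*Complex.I*β*s) * F s with hh'
  have hexp : ∀ s : ℝ, HasDerivAt (fun t : ℝ => Complex.exp (2*Complex.I*β*t))
      (2*Complex.I*β * Complex.exp (2*Complex.I*β*s)) s := by
    intro s
    have h1 : HasDerivAt (fun z : ℂ => Complex.exp (2*Complex.I*β*z))
        (Complex.exp (2*Complex.I*β*s) * (2*Complex.I*β)) (s:ℂ) := by
      simpa using ((hasDerivAt_id ((s:ℝ):ℂ)).const_mul (2*Complex.I*β)).cexp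
    have := h1.comp_ofReal
    simpa [mul_comm] using this
  have hhderiv : ∀ s : ℝ, 1 < s → HasDerivAt h (h' s) s := by
    intro s hs
    have := (hexp s).fun_mul (hg s hs)
    refine this.congr_deriv ?_
    simp only [hh']
    ring
  have hnormexp : ∀ s : ℝ, ‖Complex.exp (2*Complex.I*β*s)‖ = Real.exp (-(2*β.im) * s) := by
    intro s
    rw [Complex.norm_exp]
    congr 1
    simp [Complex.mul_re, Complex.mul_im]
  intro r hr
  have hr0 : (0:ℝ) < r := lt_trans one_pos hr
  set K : ℝ := C * Real.exp (-(2*β.im) * r) with hK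
  have hK0 : 0 ≤ K := mul_nonneg hC (Real.exp_pos _).le
  -- main estimate for R ≥ r
  have main : ∀ R : ℝ, r ≤ R → ‖h r‖ ≤ ‖h R‖ + (K/(q+1)) / r^(q+1) := by
    intro R hR
    have hsub : uIcc r R ⊆ Ioi 1 := by
      rw [uIcc_of_le hR]
      intro x hx
      exact lt_of_lt_of_le hr hx.1
    have hicc : Icc r R ⊆ Ioi 1 := by rw [← uIcc_of_le hR]; exact hsub
    have hcont : ContinuousOn h' (uIcc r R) := by
      apply ContinuousOn.mul
      · exact ((Complex.continuous_exp.comp (by continuity : Continuous fun s : ℝ => 2*Complex.I*β*(s:ℂ)))).continuousOn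
      · exact hFc.mono hsub
    have hint : IntervalIntegrable h' MeasureTheory.volume r R :=
      hcont.intervalIntegrable
    have hftc : ∫ s in r..R, h' s = h R - h r :=
      intervalIntegral.integral_eq_sub_of_hasDerivAt (fun x hx => hhderiv x (hsub hx)) hint
    have hnormint : IntervalIntegrable (fun s => ‖h' s‖) MeasureTheory.volume r R :=
      hcont.norm.intervalIntegrable
    have hphiint : IntervalIntegrable (fun s : ℝ => K * s ^ (-(q+2:ℤ))) MeasureTheory.volume r R := by
      apply ContinuousOn.intervalIntegrable
      apply ContinuousOn.mul continuousOn_const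
      apply ContinuousOn.zpow₀ continuousOn_id
      intro x hx
      exact Or.inl (ne_of_gt (lt_trans one_pos (hsub hx)))
    have hbound : ∀ s ∈ Icc r R, ‖h' s‖ ≤ K * s ^ (-(q+2:ℤ)) := by
      intro s hs
      have hs1 : 1 < s := hicc hs
      have hs0 : (0:ℝ) < s := lt_trans one_pos hs1
      have : ‖h' s‖ = Real.exp (-(2*β.im) * s) * ‖F s‖ := by
        simp only [hh', norm_mul, hnormexp]
      rw [this]
      have e1 : Real.exp (-(2*β.im) * s) ≤ Real.exp (-(2*β.im) * r) := by
        apply Real.exp_le_exp.2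
        have : 0 ≤ 2*β.im := by linarith
        nlinarith [hs.1]
      have e2 : ‖F s‖ ≤ C / s ^ (q+2) := hF s hs1
      have e3 : (s:ℝ) ^ (-(q+2:ℤ)) = (s ^ (q+2))⁻¹ := by
        rw [zpow_neg]
        norm_cast
      rw [e3, hK]
      have hFnn : 0 ≤ ‖F s‖ := norm_nonneg _
      have hsp : (0:ℝ) < s ^ (q+2) := pow_pos hs0 _
      calc Real.exp (-(2*β.im) * s) * ‖F s‖
          ≤ Real.exp (-(2*β.im) * r) * (C / s ^ (q+2)) := by
            apply mul_le_mul e1 e2 hFnn (Real.exp_pos _).le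
        _ = C * Real.exp (-(2*β.im) * r) * (s ^ (q+2))⁻¹ := by
            field_simp
    have hintle : ‖∫ s in r..R, h' s‖ ≤ ∫ s in r..R, K * s ^ (-(q+2:ℤ)) := by
      calc ‖∫ s in r..R, h' s‖ ≤ ∫ s in r..R, ‖h' s‖ :=
            intervalIntegral.norm_integral_le_integral_norm hR
        _ ≤ ∫ s in r..R, K * s ^ (-(q+2:ℤ)) :=
            intervalIntegral.integral_mono_on hR hnormint hphiint hbound
    have hzint : ∫ s in r..R, (s:ℝ) ^ (-(q+2:ℤ)) = (R ^ (-(q+1:ℤ)) - r ^ (-(q+1:ℤ))) / (-((q:ℝ)+1)) := by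
      have h0 : (0:ℝ) ∉ uIcc r R := by
        intro hx
        exact absurd (hsub hx) (by norm_num)
      have key := integral_zpow (a := r) (b := R) (n := -(q+2:ℤ)) (Or.inr ⟨by omega, h0⟩)
      have e : (-(q+2:ℤ) + 1) = -(q+1:ℤ) := by ring
      rw [e] at key
      rw [key]
      congr 1
      push_cast
      ring
    have hcalc : ∫ s in r..R, K * s ^ (-(q+2:ℤ)) ≤ (K/(q+1)) / r^(q+1) := by
      rw [intervalIntegral.integral_const_mul, hzint]
      have hR0 : (0:ℝ) < R := lt_of_lt_of_le hr0 hR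
      have hRp : (0:ℝ) < R ^ (q+1) := pow_pos hR0 _
      have hrp : (0:ℝ) < r ^ (q+1) := pow_pos hr0 _
      have e1 : (R:ℝ) ^ (-(q+1:ℤ)) = (R ^ (q+1))⁻¹ := by rw [zpow_neg]; norm_cast
      have e2 : (r:ℝ) ^ (-(q+1:ℤ)) = (r ^ (q+1))⁻¹ := by rw [zpow_neg]; norm_cast
      rw [e1, e2]
      have hq1 : (0:ℝ) < (q:ℝ) + 1 := by positivity
      have hRinv : (0:ℝ) ≤ (R ^ (q+1))⁻¹ := by positivity
      calc K * (((R ^ (q + 1))⁻¹ - (r ^ (q + 1))⁻¹) / -((q:ℝ) + 1))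
          = K * (((r ^ (q + 1))⁻¹ - (R ^ (q + 1))⁻¹) / ((q:ℝ) + 1)) := by
            rw [div_neg, ← neg_div, neg_sub]
        _ ≤ K * ((r ^ (q + 1))⁻¹ / ((q:ℝ) + 1)) := by
            gcongr
            linarith
        _ = K / ((q:ℝ)+1) / r^(q+1) := by
            field_simp
    calc ‖h r‖ = ‖h R - (h R - h r)‖ := by ring_nf
      _ ≤ ‖h R‖ + ‖h R - h r‖ := norm_sub_le _ _
      _ ≤ ‖h R‖ + (K/(q+1)) / r^(q+1) := by
          rw [← hftc]
          exact add_le_add_right (le_trans hintle hcalc) _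
  -- now take R → ∞
  have hg0 : Filter.Tendsto (fun R => ‖g R‖) Filter.atTop (nhds 0) := by
    simpa using hlim.norm
  have hhlim : Filter.Tendsto (fun R => ‖h R‖) Filter.atTop (nhds 0) := by
    apply squeeze_zero' (Filter.Eventually.of_forall fun t => norm_nonneg _) _ hg0
    filter_upwards [Filter.eventually_ge_atTop (0:ℝ)] with R hR0'
    have e1 : ‖h R‖ = Real.exp (-(2*β.im) * R) * ‖g R‖ := by
      simp only [hh, norm_mul, hnormexp]
    rw [e1]
    have e2 : Real.exp (-(2*β.im) * R) ≤ 1 := by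
      rw [Real.exp_le_one_iff]
      nlinarith
    nlinarith [norm_nonneg (g R)]
  have hfin : ‖h r‖ ≤ (K/(q+1)) / r^(q+1) := by
    have t1 : Filter.Tendsto (fun R => ‖h R‖ + (K/((q:ℝ)+1))/r^(q+1)) Filter.atTop
        (nhds (0 + (K/((q:ℝ)+1))/r^(q+1))) := hhlim.add_const _
    rw [zero_add] at t1
    exact ge_of_tendsto t1 (by
      filter_upwards [Filter.eventually_ge_atTop r] with R hR using main R hR)
  -- convert back to g
  set E : ℝ := Real.exp (-(2*β.im) * r) with hE
  have hEpos : 0 < E := Real.exp_pos _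
  have heq : ‖h r‖ = E * ‖g r‖ := by
    simp only [hh, norm_mul, hnormexp]
    rfl
  have h2 : E * ‖g r‖ ≤ E * ((C/((q:ℝ)+1))/r^(q+1)) := by
    rw [← heq]
    calc ‖h r‖ ≤ (K/((q:ℝ)+1)) / r^(q+1) := hfin
      _ = E * ((C/((q:ℝ)+1))/r^(q+1)) := by rw [hK, hE]; ring
  exact le_of_mul_le_mul_left h2 hEpos


/-- Decay of all derivatives of the normalized Green's function amplitude:
if `w″ + 2iβw′ − (c/r²)w = 0` on `(1,∞)`, `w` is bounded and all its higher
derivatives tend to `0` at infinity, then `w^{(p)}(r) = O(r^{−p})` for every `p`. -/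
theorem normalized_amplitude_derivative_decay
    (β : ℂ) (hβ1 : ‖β‖ = 1) (hβim : 0 ≤ β.im) (c : ℝ)
    (w : ℝ → ℂ) (hw : ContDiffOn ℝ (⊤ : ℕ∞) w (Ioi 1))
    (B₀ : ℝ) (hB₀ : ∀ r : ℝ, 1 < r → ‖w r‖ ≤ B₀)
    (hODE : ∀ r : ℝ, 1 < r →
      iteratedDerivWithin 2 w (Ioi 1) r
        + 2 * Complex.I * β * iteratedDerivWithin 1 w (Ioi 1) r
        - ((c : ℂ) / (r : ℂ) ^ 2) * w r = 0)
    (hlim : ∀ p : ℕ, 1 ≤ p →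
      Filter.Tendsto (fun r => iteratedDerivWithin p w (Ioi 1) r) Filter.atTop (nhds 0)) :
    ∀ p : ℕ, ∃ B : ℝ, ∀ r : ℝ, 1 < r →
      ‖iteratedDerivWithin p w (Ioi 1) r‖ ≤ B / r ^ p := by
  set f : ℕ → ℝ → ℂ := fun n => iteratedDerivWithin n w (Ioi 1) with hf
  have uo : UniqueDiffOn ℝ (Ioi (1:ℝ)) := isOpen_Ioi.uniqueDiffOn
  have hder : ∀ n : ℕ, ∀ x : ℝ, 1 < x → HasDerivAt (f n) (f (n+1) x) x := by
    intro n x hx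
    have hnb : Ioi (1:ℝ) ∈ nhds x := isOpen_Ioi.mem_nhds hx
    have hdiff : DifferentiableWithinAt ℝ (f n) (Ioi 1) x :=
      (hw.differentiableOn_iteratedDerivWithin (by exact_mod_cast ENat.coe_lt_top n) uo) x hx
    have h1 := hdiff.hasDerivWithinAt
    rw [show derivWithin (f n) (Ioi 1) x = f (n+1) x from
      (congrFun iteratedDerivWithin_succ x).symm] at h1
    exact h1.hasDerivAt hnb
  have hcont : ∀ n : ℕ, ContinuousOn (f n) (Ioi 1) := fun n =>
    hw.continuousOn_iteratedDerivWithin (by exact_mod_cast le_top) uo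
  -- structural identity for differentiated ODE
  have hQ : ∀ p : ℕ, ∃ a : ℕ → ℂ, (∀ j, p < j → a j = 0) ∧ ∀ r : ℝ, 1 < r →
      f (p+2) r + 2*Complex.I*β * f (p+1) r
        = ∑ j ∈ Finset.range (p+1), a j * f j r * (r:ℂ) ^ ((j:ℤ) - p - 2) := by
    intro p
    induction p with
    | zero =>
      refine ⟨fun j => if j = 0 then (c:ℂ) else 0, fun j hj => if_neg (by omega), ?_⟩
      intro r hr
      have hr0 : (r:ℂ) ≠ 0 := by
        simp only [ne_eq, Complex.ofReal_eq_zero]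
        linarith
      have h2 : f 2 r + 2*Complex.I*β * f 1 r = ((c:ℂ) / (r:ℂ)^2) * w r :=
        sub_eq_zero.mp (hODE r hr)
      rw [h2, Finset.sum_range_one]
      rw [show f 0 r = w r from by simp [hf]]
      beta_reduce
      rw [if_pos rfl, show ((0:ℕ):ℤ) - ((0:ℕ):ℤ) - 2 = (-2:ℤ) by norm_num,
        zpow_neg, show ((r:ℂ))^(2:ℤ) = (r:ℂ)^(2:ℕ) by norm_cast]
      field_simp
    | succ p ih =>
      obtain ⟨a, ha0, haeq⟩ := ih
      refine ⟨fun j => (if j = 0 then 0 else a (j-1)) + a j * ((j:ℂ) - p - 2),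
        ?_, ?_⟩
      · intro j hj
        have h1 : a j = 0 := ha0 j (by omega)
        have h2 : a (j-1) = 0 := ha0 (j-1) (by omega)
        have h3 : j ≠ 0 := by omega
        simp [h1, h2, h3]
      intro x hx
      have hx0 : (x:ℂ) ≠ 0 := by
        simp only [ne_eq, Complex.ofReal_eq_zero]; linarith
      -- derivative of LHS
      have hL : HasDerivAt (fun r => f (p+2) r + 2*Complex.I*β * f (p+1) r)
          (f (p+3) x + 2*Complex.I*β * f (p+2) x) x := by
        exact (hder (p+2) x hx).add ((hder (p+1) x hx).const_mul _)
      -- derivative of RHS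
      have hS : HasDerivAt (fun r : ℝ => ∑ j ∈ Finset.range (p+1),
            a j * f j r * (r:ℂ) ^ ((j:ℤ) - p - 2))
          (∑ j ∈ Finset.range (p+1),
            (a j * f (j+1) x * (x:ℂ) ^ ((j:ℤ) - p - 2)
              + a j * f j x * (((j:ℤ) - p - 2 : ℤ) : ℂ) * (x:ℂ) ^ ((j:ℤ) - p - 3))) x := by
        apply HasDerivAt.fun_sum
        intro j hj
        have hz : HasDerivAt (fun r : ℝ => ((r:ℂ)) ^ ((j:ℤ) - p - 2))
            ((((j:ℤ) - p - 2 : ℤ) : ℂ) * (x:ℂ) ^ ((j:ℤ) - p - 3)) x := by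
          have := (hasDerivAt_zpow ((j:ℤ) - p - 2) (x:ℂ) (Or.inl hx0)).comp_ofReal
          rw [show (j:ℤ) - p - 2 - 1 = (j:ℤ) - p - 3 by ring] at this
          exact this
        have h1 : HasDerivAt (fun y : ℝ => a j * f j y) (a j * f (j+1) x) x :=
          (hder j x hx).const_mul (a j)
        have := h1.fun_mul hz
        refine this.congr_deriv ?_
        ring
      -- the two functions agree near x
      have heqn : (fun r => f (p+2) r + 2*Complex.I*β * f (p+1) r)
          =ᶠ[nhds x] (fun r : ℝ => ∑ j ∈ Finset.range (p+1),
            a j * f j r * (r:ℂ) ^ ((j:ℤ) - p - 2)) := by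
        filter_upwards [isOpen_Ioi.mem_nhds hx] with y hy
        exact haeq y hy
      have hL' : HasDerivAt (fun r : ℝ => ∑ j ∈ Finset.range (p+1),
            a j * f j r * (r:ℂ) ^ ((j:ℤ) - p - 2))
          (f (p+3) x + 2*Complex.I*β * f (p+2) x) x :=
        (heqn.hasDerivAt_iff).mp hL
      have hkey := hL'.unique hS
      -- now rearrange the sum
      rw [show p + 1 + 2 = p + 3 from rfl, show p + 1 + 1 = p + 2 from rfl, hkey]
      rw [Finset.sum_add_distrib]
      have e1 : ∑ j ∈ Finset.range (p+1+1),
            (if j = 0 then 0 else a (j-1)) * f j x * (x:ℂ) ^ ((j:ℤ) - (p+1) - 2)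
          = ∑ j ∈ Finset.range (p+1), a j * f (j+1) x * (x:ℂ) ^ ((j:ℤ) - p - 2) := by
        rw [Finset.sum_range_succ' (fun j =>
          (if j = 0 then 0 else a (j-1)) * f j x * (x:ℂ) ^ ((j:ℤ) - (p+1) - 2)) (p+1)]
        norm_num
      have e2 : ∑ j ∈ Finset.range (p+1+1),
            (a j * ((j:ℂ) - p - 2)) * f j x * (x:ℂ) ^ ((j:ℤ) - (p+1) - 2)
          = ∑ j ∈ Finset.range (p+1),
            a j * f j x * (((j:ℤ) - p - 2 : ℤ) : ℂ) * (x:ℂ) ^ ((j:ℤ) - p - 3) := by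
        rw [Finset.sum_range_succ]
        rw [ha0 (p+1) (by omega)]
        simp only [zero_mul, add_zero]
        apply Finset.sum_congr rfl
        intro j hj
        have hc1 : (((j:ℤ) - p - 2 : ℤ) : ℂ) = ((j:ℂ) - p - 2) := by push_cast; ring
        rw [hc1]
        rw [show (j:ℤ) - p - 3 = (j:ℤ) - (p+1) - 2 by push_cast; ring]
        ring
      rw [← e1, ← e2, ← Finset.sum_add_distrib]
      apply Finset.sum_congr rfl
      intro j hj
      push_cast
      ring
  -- strong induction for the decay bounds
  have hP : ∀ p : ℕ, ∃ B : ℝ, 0 ≤ B ∧ ∀ r : ℝ, 1 < r → ‖f p r‖ ≤ B / r ^ p := by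
    intro p
    induction p using Nat.strong_induction_on with
    | _ p ih =>
      match p with
      | 0 =>
        refine ⟨max B₀ 0, le_max_right _ _, ?_⟩
        intro r hr
        have : f 0 r = w r := by simp [hf]
        rw [this, pow_zero, div_one]
        exact le_trans (hB₀ r hr) (le_max_left _ _)
      | Nat.succ q =>
        obtain ⟨a, ha0, haeq⟩ := hQ q
        set Bf : ℕ → ℝ := fun j => if h : j < q + 1 then (ih j h).choose else 0 with hBf
        have hBf0 : ∀ j, 0 ≤ Bf j := by
          intro j
          by_cases h : j < q + 1
          · simp only [hBf, dif_pos h]; exact (ih j h).choose_spec.1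
          · simp only [hBf, dif_neg h, le_refl]
        have hBfb : ∀ j, j < q + 1 → ∀ r : ℝ, 1 < r → ‖f j r‖ ≤ Bf j / r ^ j := by
          intro j h r hr
          simp only [hBf, dif_pos h]
          exact (ih j h).choose_spec.2 r hr
        set C : ℝ := ∑ j ∈ Finset.range (q+1), ‖a j‖ * Bf j with hC
        have hC0 : 0 ≤ C := Finset.sum_nonneg fun j _ =>
          mul_nonneg (norm_nonneg _) (hBf0 j)
        set F : ℝ → ℂ := fun r => ∑ j ∈ Finset.range (q+1),
          a j * f j r * (r:ℂ) ^ ((j:ℤ) - q - 2) with hF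
        have hFb : ∀ r : ℝ, 1 < r → ‖F r‖ ≤ C / r ^ (q+2) := by
          intro r hr
          have hr0 : (0:ℝ) < r := lt_trans one_pos hr
          have hrne : r ≠ 0 := ne_of_gt hr0
          calc ‖F r‖ ≤ ∑ j ∈ Finset.range (q+1), ‖a j * f j r * (r:ℂ) ^ ((j:ℤ) - q - 2)‖ :=
                norm_sum_le _ _
            _ ≤ ∑ j ∈ Finset.range (q+1), ‖a j‖ * Bf j / r ^ (q+2) := by
                apply Finset.sum_le_sum
                intro j hj
                have hjq : j < q + 1 := Finset.mem_range.mp hj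
                have hn : ‖a j * f j r * (r:ℂ) ^ ((j:ℤ) - q - 2)‖
                    = ‖a j‖ * ‖f j r‖ * r ^ ((j:ℤ) - q - 2) := by
                  rw [norm_mul, norm_mul]
                  congr 1
                  rw [norm_zpow, Complex.norm_real, Real.norm_eq_abs,
                    abs_of_pos hr0]
                rw [hn]
                have hb := hBfb j hjq r hr
                have hzp : (0:ℝ) < r ^ ((j:ℤ) - q - 2) := zpow_pos hr0 _
                have step1 : ‖a j‖ * ‖f j r‖ * r ^ ((j:ℤ) - q - 2)
                    ≤ ‖a j‖ * (Bf j / r ^ j) * r ^ ((j:ℤ) - q - 2) := by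
                  apply mul_le_mul_of_nonneg_right _ hzp.le
                  exact mul_le_mul_of_nonneg_left hb (norm_nonneg _)
                apply le_trans step1
                apply le_of_eq
                rw [div_eq_mul_inv, div_eq_mul_inv]
                rw [show ((j:ℤ) - q - 2) = (j:ℤ) + (-(q+2:ℤ)) by ring]
                rw [zpow_add₀ hrne, zpow_natCast, zpow_neg, ← zpow_natCast r (q+2)]
                push_cast
                field_simp
            _ = C / r ^ (q+2) := by rw [hC, Finset.sum_div]
        have hFc : ContinuousOn F (Ioi 1) := by
          apply continuousOn_finset_sum
          intro j hj
          apply ContinuousOn.mul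
          · exact (continuousOn_const.mul (hcont j))
          · apply ContinuousOn.zpow₀
            · exact Complex.continuous_ofReal.continuousOn
            · intro x hx
              left
              simp only [ne_eq, Complex.ofReal_eq_zero]
              have : (1:ℝ) < x := hx
              linarith
        have hg : ∀ x : ℝ, 1 < x →
            HasDerivAt (f (q+1)) (-(2*Complex.I*β) * f (q+1) x + F x) x := by
          intro x hx
          have h1 := hder (q+1) x hx
          have h2 : f (q+2) x = -(2*Complex.I*β) * f (q+1) x + F x := by
            have := haeq x hx
            simp only [hF]
            linear_combination this
          rw [← h2]
          exact h1
        have hgl : Filter.Tendsto (f (q+1)) Filter.atTop (nhds 0) := by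
          have := hlim (q+1) (by omega)
          exact this
        have := ode_decay_step β hβim (f (q+1)) F q C hC0 hg hFc hFb hgl
        exact ⟨C/(q+1), by positivity, this⟩
  intro p
  obtain ⟨B, _, hB⟩ := hP p
  exact ⟨B, hB⟩
end
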